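/- arXiv:2108.09824 — 2 statements merged into one kernel-verified Lean document; each statement's English description precedes it below -/
import Mathlib

section
/- Let λ = √(1/2) and let ε > 0, and set p(n) = (λ + ε)·√(log n / n). Then asymptotically almost surely the random graph Γ ∈ G(n, p(n)) contains no induced k-cycle for any k > 3·√(n·log n). -/
open MeasureTheory Filter

/-- Bernoulli measure on `Bool` with success probability `p`. -/
noncomputable def bernoulliBool (p : ℝ) : Measure Bool :=
  ENNReal.ofReal p • Measure.dirac true + ENNReal.ofReal (1 - p) • Measure.dirac false

/-- The Erdős–Rényi measure: each potential edge of a graph on `Fin n`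
is present independently with probability `p`. -/
noncomputable def edgeMeasure (n : ℕ) (p : ℝ) : Measure (Sym2 (Fin n) → Bool) :=
  Measure.pi fun _ => bernoulliBool p

/-- The simple graph determined by an indicator of edges. -/
def graphOf {n : ℕ} (ω : Sym2 (Fin n) → Bool) : SimpleGraph (Fin n) :=
  SimpleGraph.fromEdgeSet {e | ω e = true}

/-- `S` is an induced `k`-cycle in `G`: `S` has `k` vertices and the induced
subgraph on `S` is a cycle of length `k`. -/
def IsInducedCycle {V : Type*} (G : SimpleGraph V) (k : ℕ) (S : Finset V) : Prop :=
  S.card = k ∧ Nonempty (G.induce (S : Set V) ≃g SimpleGraph.cycleGraph k)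

/-- The (full) subgraph of `G` induced on the vertex set `Λ` is Morse: whenever `C` is an
induced 4-cycle of `G` such that `C ∩ Λ` contains two non-adjacent vertices, `C ⊆ Λ`. -/
def IsMorse {V : Type*} (G : SimpleGraph V) (Λ : Set V) : Prop :=
  ∀ C : Finset V, IsInducedCycle G 4 C →
    (∃ v ∈ C, ∃ w ∈ C, v ∈ Λ ∧ w ∈ Λ ∧ v ≠ w ∧ ¬ G.Adj v w) → ↑C ⊆ Λ

/-! First moment method. An induced `k`-cycle forces the `k(k-3)/2` non-edges of the cycle to be
absent, so by the union bound over the `≤ n^k` placements of the cycle the probability of an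
induced `k`-cycle is at most `n^k (1-p)^{k(k-3)/2} ≤ exp (k (log n - p (k-3)/2))`.
With `p = c √(log n / n)` and `k > 3 √(n log n)` we get `p k > 3 c log n`, and
`c = √(1/2) + ε > 2/3` makes `3c/2 > 1`, so the exponent is eventually at most `-2 log n`.
Summing over the at most `n + 1` possible lengths leaves `(n + 1)/n² → 0`. -/

open Finset SimpleGraph

lemma bernoulliBool_singleton_false (p : ℝ) :
    bernoulliBool p {false} = ENNReal.ofReal (1 - p) := by
  simp [bernoulliBool]

lemma isProbabilityMeasure_bernoulliBool {p : ℝ} (h0 : 0 ≤ p) (h1 : p ≤ 1) :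
    IsProbabilityMeasure (bernoulliBool p) := by
  constructor
  simp [bernoulliBool, ← ENNReal.ofReal_add h0 (sub_nonneg.2 h1)]

lemma isProbabilityMeasure_edgeMeasure (n : ℕ) {p : ℝ} (h0 : 0 ≤ p) (h1 : p ≤ 1) :
    IsProbabilityMeasure (edgeMeasure n p) :=
  have := isProbabilityMeasure_bernoulliBool h0 h1
  Measure.pi.instIsProbabilityMeasure _

lemma SimpleGraph.IsRegularOfDegree.two_mul_card_edgeFinset {V : Type*} [Fintype V]
    {G : SimpleGraph V} [DecidableRel G.Adj] {d : ℕ} (h : G.IsRegularOfDegree d) :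
    2 * #G.edgeFinset = Fintype.card V * d := by
  rw [← sum_degrees_eq_twice_card_edges, Finset.sum_congr rfl fun v _ => h.degree_eq v,
    sum_const, card_univ, smul_eq_mul]

lemma two_mul_card_compl_edgeFinset_cycleGraph {k : ℕ} (hk : 3 ≤ k) :
    2 * #(cycleGraph k)ᶜ.edgeFinset = k * (k - 3) := by
  obtain ⟨m, rfl⟩ := Nat.exists_eq_add_of_le' hk
  have hreg : (cycleGraph (m + 3)).IsRegularOfDegree 2 := fun _ => cycleGraph_degree_three_le
  rw [hreg.compl.two_mul_card_edgeFinset, Fintype.card_fin, Nat.sub_sub]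

section NonEdgeEvent

variable {α : Type*} {n : ℕ}

def nonEdgeEvent (H : SimpleGraph α) (f : α ↪ Fin n) : Set (Sym2 (Fin n) → Bool) :=
  {ω | ∀ d ∈ Hᶜ.edgeSet, ω (d.map f) = false}

lemma edgeMeasure_nonEdgeEvent [Fintype α] [DecidableEq α] (H : SimpleGraph α)
    [DecidableRel H.Adj] (f : α ↪ Fin n) {p : ℝ} (h0 : 0 ≤ p) (h1 : p ≤ 1) :
    edgeMeasure n p (nonEdgeEvent H f) = ENNReal.ofReal (1 - p) ^ #Hᶜ.edgeFinset := by
  have := isProbabilityMeasure_bernoulliBool h0 h1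
  set T := Hᶜ.edgeFinset.map ⟨Sym2.map f, Sym2.map.injective f.injective⟩
  have hpi : nonEdgeEvent H f = Set.univ.pi fun e => {x | e ∈ T → x = false} := by
    ext ω
    simp [nonEdgeEvent, T]
  have hfactor (e : Sym2 (Fin n)) : bernoulliBool p {x | e ∈ T → x = false} =
      if e ∈ T then ENNReal.ofReal (1 - p) else 1 := by
    split_ifs with he
    · simp [he, bernoulliBool_singleton_false]
    · have hall : {x : Bool | e ∈ T → x = false} = Set.univ := by simp [he]
      rw [hall, measure_univ]
  rw [hpi, edgeMeasure, Measure.pi_pi]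
  simp_rw [hfactor]
  rw [prod_ite_mem, univ_inter, prod_const, card_map]

lemma graphOf_adj {ω : Sym2 (Fin n) → Bool} {u v : Fin n} :
    (graphOf ω).Adj u v ↔ ω s(u, v) = true ∧ u ≠ v := by
  simp [graphOf]

lemma mem_nonEdgeEvent (H : SimpleGraph α) {ω : Sym2 (Fin n) → Bool} (φ : H ↪g graphOf ω) :
    ω ∈ nonEdgeEvent H φ.toEmbedding := by
  intro d hd
  induction d using Sym2.ind with
  | _ a b =>
    rw [mem_edgeSet, compl_adj] at hd
    have hφ : ¬ (graphOf ω).Adj (φ a) (φ b) := φ.map_adj_iff.not.2 hd.2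
    simpa [graphOf_adj, φ.injective.ne hd.1] using hφ

lemma edgeMeasure_setOf_nonempty_embedding_le [Fintype α] [DecidableEq α] (H : SimpleGraph α)
    [DecidableRel H.Adj] {p : ℝ} (h0 : 0 ≤ p) (h1 : p ≤ 1) :
    edgeMeasure n p {ω | Nonempty (H ↪g graphOf ω)} ≤
      (n : ENNReal) ^ Fintype.card α * ENNReal.ofReal (1 - p) ^ #Hᶜ.edgeFinset :=
  calc _ ≤ edgeMeasure n p (⋃ f : α ↪ Fin n, nonEdgeEvent H f) :=
        measure_mono fun _ hφ => Set.mem_iUnion.2 ⟨_, mem_nonEdgeEvent H hφ.some⟩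
    _ ≤ ∑ f : α ↪ Fin n, edgeMeasure n p (nonEdgeEvent H f) := measure_iUnion_fintype_le _ _
    _ = Fintype.card (α ↪ Fin n) * ENNReal.ofReal (1 - p) ^ #Hᶜ.edgeFinset := by
        simp [edgeMeasure_nonEdgeEvent H _ h0 h1]
    _ ≤ _ := by
        gcongr
        rw [Fintype.card_embedding_eq, Fintype.card_fin]
        exact_mod_cast Nat.descFactorial_le_pow _ _

end NonEdgeEvent

lemma IsInducedCycle.nonempty_embedding {V : Type*} {G : SimpleGraph V} {k : ℕ} {S : Finset V}
    (h : IsInducedCycle G k S) : Nonempty (cycleGraph k ↪g G) :=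
  let ⟨_, ⟨e⟩⟩ := h
  ⟨(Embedding.induce _).comp e.symm.toEmbedding⟩

lemma pow_mul_one_sub_pow_le_exp {x q : ℝ} (hx : 0 < x) (hq : q ≤ 1) (k m : ℕ) :
    x ^ k * (1 - q) ^ m ≤ Real.exp (k * Real.log x - q * m) := by
  calc x ^ k * (1 - q) ^ m ≤ Real.exp (Real.log x) ^ k * Real.exp (-q) ^ m := by
        have := Real.add_one_le_exp (-q)
        rw [Real.exp_log hx]
        gcongr
        linarith
    _ = Real.exp (k * Real.log x - q * m) := by
        rw [← Real.exp_nat_mul, ← Real.exp_nat_mul, ← Real.exp_add]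
        ring_nf

lemma edgeMeasure_exists_inducedCycle_le {n k : ℕ} (hn : 0 < n) (hk : 3 ≤ k) {p : ℝ}
    (h0 : 0 ≤ p) (h1 : p ≤ 1) :
    edgeMeasure n p {ω | ∃ S, IsInducedCycle (graphOf ω) k S} ≤
      ENNReal.ofReal (Real.exp (k * (Real.log n - p * (k - 3) / 2))) := by
  have hm : (#(cycleGraph k)ᶜ.edgeFinset : ℝ) = k * (k - 3) / 2 := by
    have := two_mul_card_compl_edgeFinset_cycleGraph hk
    rw [eq_div_iff two_ne_zero, mul_comm, ← Nat.cast_ofNat, ← Nat.cast_mul, this,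
      Nat.cast_mul, Nat.cast_sub hk]
    norm_num
  calc _ ≤ edgeMeasure n p {ω | Nonempty (cycleGraph k ↪g graphOf ω)} :=
        measure_mono fun _ hS => hS.choose_spec.nonempty_embedding
    _ ≤ (n : ENNReal) ^ k * ENNReal.ofReal (1 - p) ^ #(cycleGraph k)ᶜ.edgeFinset := by
        simpa using edgeMeasure_setOf_nonempty_embedding_le (cycleGraph k) h0 h1
    _ = ENNReal.ofReal ((n : ℝ) ^ k * (1 - p) ^ #(cycleGraph k)ᶜ.edgeFinset) := by
        rw [ENNReal.ofReal_mul (by positivity), ENNReal.ofReal_pow (by positivity),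
          ENNReal.ofReal_pow (by linarith), ENNReal.ofReal_natCast]
    _ ≤ _ := by
        gcongr
        refine (pow_mul_one_sub_pow_le_exp (by exact_mod_cast hn) h1 _ _).trans_eq ?_
        rw [hm]
        ring_nf

lemma edgeMeasure_exists_long_inducedCycle_le {n : ℕ} (hn : 0 < n) {p K B : ℝ} (h0 : 0 ≤ p)
    (h1 : p ≤ 1) (hK : 3 ≤ K)
    (hB : ∀ k : ℕ, K < k → k * (Real.log n - p * (k - 3) / 2) ≤ B) :
    edgeMeasure n p {ω | ∃ k : ℕ, K < k ∧ ∃ S, IsInducedCycle (graphOf ω) k S} ≤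
      ENNReal.ofReal ((n + 1) * Real.exp B) := by
  let E (k : ℕ) : Set (Sym2 (Fin n) → Bool) :=
    {ω | K < k ∧ ∃ S, IsInducedCycle (graphOf ω) k S}
  have hsub : {ω | ∃ k : ℕ, K < k ∧ ∃ S, IsInducedCycle (graphOf ω) k S} ⊆
      ⋃ k ∈ range (n + 1), E k := by
    rintro ω ⟨k, hk, S, hS⟩
    have hkn : k ≤ n := by simpa [hS.1] using S.card_le_univ
    exact Set.mem_biUnion (mem_range.2 (Nat.lt_succ_of_le hkn)) ⟨hk, S, hS⟩
  have hterm (k : ℕ) : edgeMeasure n p (E k) ≤ ENNReal.ofReal (Real.exp B) := by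
    by_cases hk : K < k
    · have hk3 : 3 ≤ k := by exact_mod_cast hK.trans hk.le
      simp only [E, hk, true_and]
      exact (edgeMeasure_exists_inducedCycle_le hn hk3 h0 h1).trans
        (ENNReal.ofReal_le_ofReal (Real.exp_le_exp.2 (hB k hk)))
    · simp [E, hk]
  calc _ ≤ ∑ k ∈ range (n + 1), edgeMeasure n p (E k) :=
        (measure_mono hsub).trans (measure_biUnion_finset_le _ _)
    _ ≤ ∑ _ ∈ range (n + 1), ENNReal.ofReal (Real.exp B) := sum_le_sum fun k _ => hterm k
    _ = _ := by
        rw [sum_const, card_range, nsmul_eq_mul, ENNReal.ofReal_mul (by positivity)]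
        norm_cast

lemma tendsto_mul_sqrt_log_div_self_nhds_zero (c : ℝ) :
    Tendsto (fun n : ℕ => c * √(Real.log n / n)) atTop (nhds 0) := by
  have h := Real.isLittleO_log_id_atTop.tendsto_div_nhds_zero.comp tendsto_natCast_atTop_atTop
  have hsqrt := ((Real.continuous_sqrt.tendsto 0).comp h).const_mul c
  rwa [Real.sqrt_zero, mul_zero] at hsqrt

lemma eventually_mul_sqrt_log_div_self_le_one (c : ℝ) :
    ∀ᶠ n : ℕ in atTop, c * √(Real.log n / n) ≤ 1 :=
  (tendsto_mul_sqrt_log_div_self_nhds_zero c).eventually (eventually_le_nhds one_pos)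

lemma tendsto_sqrt_mul_log_atTop : Tendsto (fun n : ℕ => √(n * Real.log n)) atTop atTop :=
  Real.tendsto_sqrt_atTop.comp <| tendsto_natCast_atTop_atTop.atTop_mul_atTop₀ <|
    Real.tendsto_log_atTop.comp tendsto_natCast_atTop_atTop

lemma eventually_exponent_le_neg_two_mul_log {c : ℝ} (hc : 2 / 3 < c) :
    ∀ᶠ n : ℕ in atTop, ∀ k : ℕ, 3 * √(n * Real.log n) < k →
      k * (Real.log n - c * √(Real.log n / n) * (k - 3) / 2) ≤ -2 * Real.log n := by
  set δ := 3 * c / 2 - 1 with hδdef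
  have hδ : 0 < δ := by linarith
  have hlog : Tendsto (fun n : ℕ => Real.log n) atTop atTop :=
    Real.tendsto_log_atTop.comp tendsto_natCast_atTop_atTop
  filter_upwards [eventually_gt_atTop 0, hlog.eventually_ge_atTop 1,
    (tendsto_mul_sqrt_log_div_self_nhds_zero c).eventually
      (eventually_le_nhds (by positivity : 0 < δ / 3)),
    tendsto_sqrt_mul_log_atTop.eventually_ge_atTop (4 / (3 * δ))] with n hn hL hpδ hsδ k hk
  set L := Real.log n
  set s := √(n * L)
  set p := c * √(L / n)
  have hn' : (0 : ℝ) < n := by exact_mod_cast hn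
  have hp0 : 0 ≤ p := by positivity
  have hps : p * s = c * L := by
    have hLL : L / n * (n * L) = L * L := by field_simp
    rw [mul_assoc, ← Real.sqrt_mul (by positivity), hLL, Real.sqrt_mul_self (by linarith)]
  have hpk : 3 * (c * L) ≤ p * k :=
    calc 3 * (c * L) = p * (3 * s) := by rw [← hps]; ring
      _ ≤ p * k := mul_le_mul_of_nonneg_left hk.le hp0
  have hδL : δ ≤ δ * L := le_mul_of_one_le_right hδ.le hL
  have hcL : 3 * (c * L) = 2 * (δ * L) + 2 * L := by rw [hδdef]; ring
  have hinner : L - p * (k - 3) / 2 ≤ -(δ / 2) * L := by linarith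
  have hsδ' : 2 ≤ 3 * s * (δ / 2) := by
    rw [div_le_iff₀ (by positivity)] at hsδ; linarith
  calc k * (L - p * (k - 3) / 2) ≤ k * (-(δ / 2) * L) :=
        mul_le_mul_of_nonneg_left hinner (Nat.cast_nonneg k)
    _ ≤ 3 * s * (-(δ / 2) * L) := mul_le_mul_of_nonpos_right hk.le (by nlinarith)
    _ ≤ -2 * L := by nlinarith

lemma tendsto_add_one_mul_exp_neg_two_mul_log :
    Tendsto (fun n : ℕ => ((n : ℝ) + 1) * Real.exp (-2 * Real.log n)) atTop (nhds 0) := by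
  have h := tendsto_inv_atTop_nhds_zero_nat (𝕜 := ℝ)
  have hlim : Tendsto (fun n : ℕ => (n : ℝ)⁻¹ + (n : ℝ)⁻¹ ^ 2) atTop (nhds 0) := by
    simpa using h.add (h.pow 2)
  refine hlim.congr' ?_
  filter_upwards [eventually_gt_atTop 0] with n hn
  have hexp : Real.exp (-2 * Real.log n) = ((n : ℝ) ^ 2)⁻¹ := by
    rw [neg_mul, Real.exp_neg, ← Nat.cast_ofNat, ← Real.log_pow, Real.exp_log (by positivity)]
  rw [hexp]
  field_simp

lemma tendsto_edgeMeasure_exists_long_inducedCycle {c : ℝ} (hc : 2 / 3 < c) :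
    Tendsto (fun n : ℕ => edgeMeasure n (c * √(Real.log n / n))
      {ω | ∃ k : ℕ, 3 * √(n * Real.log n) < k ∧ ∃ S, IsInducedCycle (graphOf ω) k S})
      atTop (nhds 0) := by
  have hbound := ENNReal.tendsto_ofReal tendsto_add_one_mul_exp_neg_two_mul_log
  rw [ENNReal.ofReal_zero] at hbound
  refine tendsto_of_tendsto_of_tendsto_of_le_of_le' tendsto_const_nhds hbound
    (Eventually.of_forall fun _ => zero_le) ?_
  filter_upwards [eventually_gt_atTop 0, eventually_mul_sqrt_log_div_self_le_one c,
    tendsto_sqrt_mul_log_atTop.eventually_ge_atTop 1,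
    eventually_exponent_le_neg_two_mul_log hc] with n hn hp1 hs1 hB
  exact edgeMeasure_exists_long_inducedCycle_le hn (by positivity) hp1 (by linarith) hB

/-- At density exactly $(\sqrt{1/2}+\epsilon)\sqrt{\log n / n}$, a.a.s. a random graph
contains no induced k-cycle with $k > 3\sqrt{n \log n}$. -/
theorem aas_no_long_induced_cycle (ε : ℝ) (hε : 0 < ε) (p : ℕ → ℝ)
    (hpdef : ∀ n : ℕ, p n = (Real.sqrt (1 / 2) + ε) * Real.sqrt (Real.log n / n)) :
    Tendsto
      (fun n : ℕ =>
        edgeMeasure n (p n)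
          {ω | ∀ k : ℕ, (k : ℝ) > 3 * Real.sqrt (n * Real.log n) →
            ∀ S : Finset (Fin n), ¬ IsInducedCycle (graphOf ω) k S})
      atTop (nhds 1) := by
  have hc : 2 / 3 < √(1 / 2) + ε := by
    have : (2 / 3 : ℝ) < √(1 / 2) := Real.lt_sqrt_of_sq_lt (by norm_num)
    linarith
  have hbad := tendsto_edgeMeasure_exists_long_inducedCycle hc
  have hcompl := ENNReal.Tendsto.sub tendsto_const_nhds hbad (Or.inl ENNReal.one_ne_top)
  rw [tsub_zero] at hcompl
  refine hcompl.congr' ?_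
  filter_upwards [eventually_mul_sqrt_log_div_self_le_one (√(1 / 2) + ε)] with n hp1
  have := isProbabilityMeasure_edgeMeasure n (by positivity) hp1
  rw [hpdef n, ← prob_compl_eq_one_sub MeasurableSet.of_discrete]
  congr 1
  ext ω
  simp
end

section
/- Let Γ be a finite simple graph, let k ≥ 5, and let C be an induced k-cycle in Γ. Then C is a Morse subgraph of Γ if and only if for every pair of non-adjacent vertices v, w of C, the common neighborhood link(v) ∩ link(w) induces a clique in Γ. -/
open MeasureTheory Filter

/-!
Two non-adjacent vertices `v, w` lie on a common induced 4-cycle exactly when they have two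
distinct non-adjacent common neighbours `x, y`, the cycle being `v x w y`. If every such common
neighbourhood of `C` is a clique, no induced 4-cycle meets `C` in a non-adjacent pair, so `C` is
Morse vacuously. Conversely, if `C` is Morse and `v, w ∈ C` had such `x, y`, the 4-cycle `v x w y`
would lie in `C`; but in a cycle of length at least 5 two distinct vertices have at most one
common neighbour.
-/

section

open SimpleGraph

variable {V : Type*} {G : SimpleGraph V}

namespace SimpleGraph

theorem cycleGraph_commonNeighbors_subsingleton {n : ℕ} (hn : 5 ≤ n) {a b : Fin n}
    (hab : a ≠ b) : ((cycleGraph n).commonNeighbors a b).Subsingleton := by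
  obtain ⟨m, rfl⟩ : ∃ m, n = m + 5 := ⟨n - 5, by omega⟩
  have four_ne_zero : (4 : Fin (m + 5)) ≠ 0 := by
    simp [Fin.ext_iff, Nat.mod_eq_of_lt (show 4 < m + 5 by omega)]
  rintro c ⟨hac, hbc⟩ d ⟨had, hbd⟩
  simp only [mem_neighborSet, cycleGraph_adj (n := m + 3)] at hac hbc had hbd
  -- Each adjacency is a difference `± 1`; two distinct common neighbours would force `4 = 0`.
  grind

theorem cycleGraph_four_exists_nonadj_commonNeighbors {a b : Fin 4}
    (hnab : ¬ (cycleGraph 4).Adj a b) :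
    ∃ c ∈ (cycleGraph 4).commonNeighbors a b, ∃ d ∈ (cycleGraph 4).commonNeighbors a b,
      c ≠ d ∧ ¬ (cycleGraph 4).Adj c d := by
  revert a b
  simp only [mem_commonNeighbors]
  decide

def cycleGraphFourEmbedding {v x w y : V} (hvx : G.Adj v x) (hxw : G.Adj x w)
    (hwy : G.Adj w y) (hyv : G.Adj y v) (hnvw : ¬ G.Adj v w) (hnxy : ¬ G.Adj x y)
    (hvw : v ≠ w) (hxy : x ≠ y) : cycleGraph 4 ↪g G where
  toFun := ![v, x, w, y]
  inj' := by
    intro i j hij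
    fin_cases i <;> fin_cases j <;> simp_all [eq_comm]
  map_rel_iff' := by
    intro i j
    change G.Adj (![v, x, w, y] i) (![v, x, w, y] j) ↔ _
    fin_cases i <;> fin_cases j <;> simp_all [adj_comm] <;> decide

end SimpleGraph

theorem isInducedCycle_of_embedding {k : ℕ} (f : cycleGraph k ↪g G) :
    IsInducedCycle G k (Finset.univ.map f.toEmbedding) := by
  refine ⟨by simp, ?_⟩
  rw [Finset.coe_map, Finset.coe_univ, Set.image_univ]
  exact ⟨f.isoInduceRange.symm⟩

theorem IsInducedCycle.commonNeighbors_inter_subsingleton {k : ℕ} {C : Finset V}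
    (hC : IsInducedCycle G k C) (hk : 5 ≤ k) {v w : V} (hv : v ∈ C) (hw : w ∈ C)
    (hvw : v ≠ w) : (G.commonNeighbors v w ∩ C).Subsingleton := by
  obtain ⟨-, ⟨e⟩⟩ := hC
  rintro x ⟨hx, hxC⟩ y ⟨hy, hyC⟩
  have hcycle := cycleGraph_commonNeighbors_subsingleton hk
    (a := e ⟨v, hv⟩) (b := e ⟨w, hw⟩) (by simpa using hvw)
  simpa using hcycle (x := e ⟨x, hxC⟩) (y := e ⟨y, hyC⟩)
    (by simpa [mem_commonNeighbors, e.map_adj_iff] using hx)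
    (by simpa [mem_commonNeighbors, e.map_adj_iff] using hy)

theorem IsInducedCycle.exists_nonadj_commonNeighbors {D : Finset V}
    (hD : IsInducedCycle G 4 D) {v w : V} (hv : v ∈ D) (hw : w ∈ D)
    (hnvw : ¬ G.Adj v w) :
    ∃ x ∈ G.commonNeighbors v w, ∃ y ∈ G.commonNeighbors v w, x ≠ y ∧ ¬ G.Adj x y := by
  obtain ⟨-, ⟨e⟩⟩ := hD
  obtain ⟨c, hc, d, hd, hcd, hncd⟩ := cycleGraph_four_exists_nonadj_commonNeighbors
    (a := e ⟨v, hv⟩) (b := e ⟨w, hw⟩) (by simpa [e.map_adj_iff] using hnvw)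
  refine ⟨e.symm c, ?_, e.symm d, ?_, by simpa using hcd,
    by simpa [← e.symm.map_adj_iff] using hncd⟩
  · simpa [mem_commonNeighbors, ← e.symm.map_adj_iff] using hc
  · simpa [mem_commonNeighbors, ← e.symm.map_adj_iff] using hd

theorem IsMorse.mem_of_mem_commonNeighbors {Λ : Set V} (hΛ : IsMorse G Λ) {v w x y : V}
    (hv : v ∈ Λ) (hw : w ∈ Λ) (hvw : v ≠ w) (hnvw : ¬ G.Adj v w)
    (hx : x ∈ G.commonNeighbors v w) (hy : y ∈ G.commonNeighbors v w) (hxy : x ≠ y)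
    (hnxy : ¬ G.Adj x y) : x ∈ Λ ∧ y ∈ Λ := by
  let f := cycleGraphFourEmbedding hx.1 hx.2.symm hy.2 hy.1.symm hnvw hnxy hvw hxy
  have hmem (i : Fin 4) : f i ∈ Finset.univ.map f.toEmbedding :=
    Finset.mem_map_of_mem _ (Finset.mem_univ i)
  have hsub := hΛ _ (isInducedCycle_of_embedding f) ⟨v, hmem 0, w, hmem 2, hv, hw, hvw, hnvw⟩
  exact ⟨hsub (hmem 1), hsub (hmem 3)⟩

end

theorem morse_iff_common_neighborhoods_cliques_general {V : Type*}
    (G : SimpleGraph V) (k : ℕ) (hk : 5 ≤ k) (C : Finset V)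
    (hC : IsInducedCycle G k C) :
    IsMorse G ↑C ↔
      ∀ v ∈ C, ∀ w ∈ C, v ≠ w → ¬ G.Adj v w →
        G.IsClique (G.neighborSet v ∩ G.neighborSet w) := by
  constructor
  · intro hM v hv w hw hvw hnvw x hx y hy hxy
    by_contra hnxy
    obtain ⟨hxC, hyC⟩ := hM.mem_of_mem_commonNeighbors hv hw hvw hnvw hx hy hxy hnxy
    exact hxy (hC.commonNeighbors_inter_subsingleton hk hv hw hvw ⟨hx, hxC⟩ ⟨hy, hyC⟩)
  · rintro hclique D hD ⟨v, hvD, w, hwD, hv, hw, hvw, hnvw⟩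
    obtain ⟨x, hx, y, hy, hxy, hnxy⟩ := hD.exists_nonadj_commonNeighbors hvD hwD hnvw
    exact absurd (hclique v hv w hw hvw hnvw hx hy hxy) hnxy

/-- For k at least 5, an induced k-cycle C is Morse iff for every pair of non-adjacent
vertices v, w of C the common neighborhood of v and w is a clique. -/
theorem morse_iff_common_neighborhoods_cliques {V : Type*} [Fintype V]
    (G : SimpleGraph V) (k : ℕ) (hk : 5 ≤ k) (C : Finset V)
    (hC : IsInducedCycle G k C) :
    IsMorse G ↑C ↔
      ∀ v ∈ C, ∀ w ∈ C, v ≠ w → ¬ G.Adj v w →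
        G.IsClique (G.neighborSet v ∩ G.neighborSet w) :=
  morse_iff_common_neighborhoods_cliques_general G k hk C hC
end
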